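/- The group Γ presented by generators a_k for k ∈ ℤ and relations a_{k+2} = a_k⁻² a_{k+1}² and a_k a_{k+1} = a_{k+1} a_k (for all k ∈ ℤ) is left-orderable. Moreover, there is a group homomorphism from Γ to the additive group of complex numbers sending a_k to (1−i)^k, and every finitely generated subgroup of Γ embeds into a subgroup generated by two commuting generators a_{s−2}, a_{s−1}, hence is free abelian of rank at most 2. -/

import Mathlib

universe u

/-- A group is left-orderable if it admits a left-invariant strict total order. -/
def IsLeftOrderable (G : Type u) [Group G] : Prop :=
  ∃ r : G → G → Prop, IsStrictTotalOrder G r ∧ ∀ h a b : G, r a b → r (h * a) (h * b)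

/-- The relators of the group
`Γ = ⟨a_k (k ∈ ℤ) | a_{k+2} = a_k⁻² a_{k+1}², a_k a_{k+1} = a_{k+1} a_k⟩`,
the commutator subgroup of the virtual knot group `G₉`. -/
def GammaRels : Set (FreeGroup ℤ) :=
  {r | ∃ k : ℤ,
    r = FreeGroup.of (k + 2) *
          (FreeGroup.of k ^ (-2 : ℤ) * FreeGroup.of (k + 1) ^ (2 : ℤ))⁻¹ ∨
    r = FreeGroup.of k * FreeGroup.of (k + 1) *
          (FreeGroup.of (k + 1) * FreeGroup.of k)⁻¹}

/-!
Sending `a_k` to `(1 - i)^k` respects the relations because `z = 1 - i` is a root of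
`z² - 2z + 2`. By `a_{k+2} = a_k⁻² a_{k+1}²`, the commuting pair `a_k, a_{k+1}` generates every
`a_j` with `j ≥ k`, so `Γ` is the increasing union of the abelian subgroups `⟨a_k, a_{k+1}⟩`,
each a quotient of `ℤ²`. On such a subgroup the map to `ℂ` reads
`(m, n) ↦ (1 - i)^k (m + n (1 - i))`, which is injective since `1` and `1 - i` are linearly
independent over `ℤ`. Hence these subgroups are copies of `ℤ²`, `Γ` embeds in `(ℂ, +)`, and `Γ`
inherits the lexicographic order on real and imaginary parts.
-/

open Subgroup

theorem IsLeftOrderable.of_injective {G : Type u} {H : Type*} [Group G] [Group H] (f : G →* H)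
    (hf : Function.Injective f) (hH : IsLeftOrderable H) : IsLeftOrderable G := by
  obtain ⟨r, hr, hr_mul⟩ := hH
  refine ⟨fun a b => r (f a) (f b),
    { trichotomous := fun a b hab hba => hf (hr.trichotomous _ _ hab hba)
      irrefl := fun a => hr.irrefl (f a)
      trans := fun a b c => hr.trans _ _ _ }, fun h a b hab => ?_⟩
  simpa only [map_mul] using hr_mul (f h) _ _ hab

theorem isLeftOrderable_of_mulLeftStrictMono {H : Type*} [Group H] [LinearOrder H]
    [MulLeftStrictMono H] : IsLeftOrderable H :=
  ⟨(· < ·), inferInstance, fun h _ _ hab => mul_lt_mul_right hab h⟩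

theorem isLeftOrderable_multiplicative_complex : IsLeftOrderable (Multiplicative ℂ) :=
  let e := (Complex.equivRealProdAddHom.trans (toLexAddEquiv (ℝ × ℝ))).toMultiplicative
  .of_injective e.toMonoidHom e.injective isLeftOrderable_of_mulLeftStrictMono

namespace Commute

variable {G : Type*} [Group G] {x y : G}

def zpowersPairHom (h : Commute x y) : Multiplicative (ℤ × ℤ) →* G :=
  ((zpowersHom G x).noncommCoprod (zpowersHom G y) fun m n => h.zpow_zpow m.toAdd n.toAdd).comp
    (MulEquiv.prodMultiplicative ℤ ℤ).toMonoidHom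

theorem zpowersPairHom_apply (h : Commute x y) (p : Multiplicative (ℤ × ℤ)) :
    h.zpowersPairHom p = x ^ p.toAdd.1 * y ^ p.toAdd.2 :=
  rfl

theorem range_zpowersPairHom (h : Commute x y) : h.zpowersPairHom.range = closure {x, y} := by
  refine le_antisymm ?_ ((closure_le _).mpr ?_)
  · rintro _ ⟨p, rfl⟩
    rw [zpowersPairHom_apply]
    exact mul_mem (zpow_mem (subset_closure (by simp)) _) (zpow_mem (subset_closure (by simp)) _)
  · rintro _ (rfl | rfl)
    exacts [⟨.ofAdd (1, 0), by simp [zpowersPairHom_apply]⟩,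
      ⟨.ofAdd (0, 1), by simp [zpowersPairHom_apply]⟩]

end Commute

theorem MonoidHom.exists_injective_of_le_range {G M : Type*} [Group G] [Group M] {f : M →* G}
    (hf : Function.Injective f) {S : Subgroup G} (hS : S ≤ f.range) :
    ∃ g : S →* M, Function.Injective g :=
  ⟨(MonoidHom.ofInjective hf).symm.toMonoidHom.comp (inclusion hS),
    (MonoidHom.ofInjective hf).symm.injective.comp (inclusion_injective hS)⟩

namespace Gamma

open PresentedGroup Complex

local notation "Γ" => PresentedGroup GammaRels

theorem of_add_two (k : ℤ) :
    (of (k + 2) : Γ) = of k ^ (-2 : ℤ) * of (k + 1) ^ (2 : ℤ) := by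
  simpa only [map_mul, map_zpow, PresentedGroup.of] using
    mk_eq_mk_of_mul_inv_mem (rels := GammaRels) ⟨k, .inl rfl⟩

theorem commute_of_of_add_one (k : ℤ) : Commute (of k : Γ) (of (k + 1)) := by
  simpa only [commute_iff_eq, map_mul, PresentedGroup.of] using
    mk_eq_mk_of_mul_inv_mem (rels := GammaRels) ⟨k, .inr rfl⟩

theorem one_sub_I_ne_zero : (1 - I : ℂ) ≠ 0 := by
  simp [Complex.ext_iff]

theorem one_sub_I_zpow_add_two (k : ℤ) :
    (1 - I) ^ (k + 2) = -2 * (1 - I) ^ k + 2 * (1 - I) ^ (k + 1) := by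
  rw [zpow_add₀ one_sub_I_ne_zero, zpow_add₀ one_sub_I_ne_zero, zpow_two, zpow_one]
  linear_combination (1 - I) ^ k * I_sq

theorem lift_eq_one_of_mem_gammaRels :
    ∀ r ∈ GammaRels, FreeGroup.lift (fun k : ℤ => Multiplicative.ofAdd ((1 - I) ^ k)) r = 1 := by
  rintro r ⟨k, rfl | rfl⟩ <;>
    simp only [map_mul, map_inv, map_zpow, FreeGroup.lift_apply_of, ← ofAdd_add, ← ofAdd_neg,
      ← ofAdd_zsmul, ofAdd_eq_one, zsmul_eq_mul]
  · rw [one_sub_I_zpow_add_two]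
    push_cast
    ring
  · ring

noncomputable def toComplex : Γ →* Multiplicative ℂ :=
  toGroup lift_eq_one_of_mem_gammaRels

theorem toComplex_of (k : ℤ) : toComplex (of k) = .ofAdd ((1 - I) ^ k) :=
  toGroup.of lift_eq_one_of_mem_gammaRels

noncomputable def pairHom (k : ℤ) : Multiplicative (ℤ × ℤ) →* Γ :=
  (commute_of_of_add_one k).zpowersPairHom

theorem toComplex_pairHom (k : ℤ) (p : Multiplicative (ℤ × ℤ)) :
    toComplex (pairHom k p) = .ofAdd ((1 - I) ^ k * (p.toAdd.1 + p.toAdd.2 * (1 - I))) := by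
  rw [pairHom, Commute.zpowersPairHom_apply, map_mul, map_zpow, map_zpow, toComplex_of,
    toComplex_of, zpow_add_one₀ one_sub_I_ne_zero, ← ofAdd_zsmul, ← ofAdd_zsmul, ← ofAdd_add,
    zsmul_eq_mul, zsmul_eq_mul]
  ring_nf

theorem toComplex_comp_pairHom_injective (k : ℤ) :
    Function.Injective (toComplex.comp (pairHom k)) := by
  refine (injective_iff_map_eq_one _).mpr fun p hp => ?_
  rw [MonoidHom.comp_apply, toComplex_pairHom, ofAdd_eq_one, mul_eq_zero] at hp
  have hmn : (p.toAdd.1 : ℂ) + p.toAdd.2 * (1 - I) = 0 :=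
    hp.resolve_left (zpow_ne_zero k one_sub_I_ne_zero)
  have hn : p.toAdd.2 = 0 := by simpa using congrArg im hmn
  have hm : p.toAdd.1 = 0 := by simpa [hn] using congrArg re hmn
  exact toAdd_eq_zero.mp (Prod.ext hm hn)

theorem pairHom_injective (k : ℤ) : Function.Injective (pairHom k) :=
  (toComplex_comp_pairHom_injective k).of_comp (f := toComplex)

def pairSubgroup (k : ℤ) : Subgroup Γ :=
  closure {of k, of (k + 1)}

theorem range_pairHom (k : ℤ) : (pairHom k).range = pairSubgroup k :=
  Commute.range_zpowersPairHom _

theorem pairSubgroup_antitone : Antitone pairSubgroup := by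
  refine antitone_int_of_succ_le fun k => (closure_le _).mpr ?_
  have hk : of k ∈ pairSubgroup k := subset_closure (by simp)
  have hk₁ : of (k + 1) ∈ pairSubgroup k := subset_closure (by simp)
  rintro _ (rfl | rfl)
  · exact hk₁
  · rw [add_assoc, one_add_one_eq_two, of_add_two]
    exact mul_mem (zpow_mem hk _) (zpow_mem hk₁ _)

theorem iSup_pairSubgroup : ⨆ k, pairSubgroup k = ⊤ := by
  rw [eq_top_iff, ← closure_range_of, closure_le]
  rintro _ ⟨k, rfl⟩
  exact mem_iSup_of_mem k (subset_closure (by simp))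

theorem exists_le_pairSubgroup_of_fg {S : Subgroup Γ} (hS : S.FG) :
    ∃ k, S ≤ pairSubgroup k := by
  obtain ⟨T, rfl⟩ := hS
  have hdir : Directed (· ≤ ·) pairSubgroup := pairSubgroup_antitone.directed_le
  have hmem (g : Γ) : ∃ k, g ∈ pairSubgroup k :=
    (mem_iSup_of_directed hdir).mp (iSup_pairSubgroup ▸ mem_top g)
  choose level hlevel using hmem
  obtain ⟨k, hk⟩ := hdir.finset_le (T.image level)
  exact ⟨k, (closure_le _).mpr fun g hg => hk _ (Finset.mem_image_of_mem level hg) (hlevel g)⟩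

theorem toComplex_injective : Function.Injective toComplex := by
  refine (injective_iff_map_eq_one _).mpr fun g hg => ?_
  obtain ⟨k, hk⟩ :=
    exists_le_pairSubgroup_of_fg (S := zpowers g) ⟨{g}, by simp [zpowers_eq_closure]⟩
  obtain ⟨p, rfl⟩ : g ∈ (pairHom k).range := range_pairHom k ▸ hk (mem_zpowers g)
  rw [(injective_iff_map_eq_one _).mp (toComplex_comp_pairHom_injective k) p hg, map_one]

end Gamma

/-- The group
`Γ = ⟨a_k (k ∈ ℤ) | a_{k+2} = a_k⁻² a_{k+1}², a_k a_{k+1} = a_{k+1} a_k⟩` is left-orderable;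
there is a homomorphism `Γ → (ℂ, +)` sending `a_k` to `(1 - i)^k`; and every finitely
generated subgroup of `Γ` is contained in the subgroup generated by two commuting
generators `a_{s-2}, a_{s-1}`, hence embeds into `ℤ × ℤ` (is free abelian of rank ≤ 2). -/
theorem Gamma_leftOrderable :
    IsLeftOrderable (PresentedGroup GammaRels) ∧
    (∃ φ : PresentedGroup GammaRels →* Multiplicative ℂ,
      ∀ k : ℤ, φ (PresentedGroup.of k) = Multiplicative.ofAdd ((1 - Complex.I) ^ k)) ∧
    (∀ S : Subgroup (PresentedGroup GammaRels), S.FG →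
      ∃ s : ℤ,
        S ≤ Subgroup.closure
            {PresentedGroup.of (s - 2), PresentedGroup.of (s - 1)} ∧
        ∃ f : S →* Multiplicative (ℤ × ℤ), Function.Injective f) := by
  refine ⟨.of_injective _ Gamma.toComplex_injective isLeftOrderable_multiplicative_complex,
    ⟨Gamma.toComplex, Gamma.toComplex_of⟩, fun S hS => ?_⟩
  obtain ⟨k, hk⟩ := Gamma.exists_le_pairSubgroup_of_fg hS
  refine ⟨k + 2, by simpa [Gamma.pairSubgroup, add_sub_assoc] using hk, ?_⟩
  exact MonoidHom.exists_injective_of_le_range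
    (Gamma.pairHom_injective k) (Gamma.range_pairHom k ▸ hk)
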